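/- Fix n ≥ 1 and a ∈ ℂ*. Consider F : (ℂ*)ⁿ × ℂ → ℂ, F(z₁,…,z_n, w) = z₁ + ⋯ + z_n + w·(a - z₁⋯z_n). A point (z, w) with all z_i ≠ 0 is a critical point of F (all n+1 partial derivatives vanish) if and only if there exists ζ ∈ ℂ* with ζⁿ = a, z₁ = ⋯ = z_n = ζ, and w = ζ^{1-n}. -/

import Mathlib

/-!
The partial derivatives of `F` are `∂F/∂w = a - ∏ⱼ zⱼ` and `∂F/∂zᵢ = 1 - w ∏_{j ≠ i} zⱼ`.
Multiplying the latter by `zᵢ` gives `zᵢ = w ∏ⱼ zⱼ = w a`, so all coordinates equal `ζ = w a`;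
then `ζⁿ = a` and `w = ζ / ζⁿ = ζ^{1-n}`. Conversely these values solve both equations.
-/

open Finset

section Superpotential

variable {𝕜 : Type*} [NontriviallyNormedField 𝕜] {ι : Type*} [Fintype ι] [DecidableEq ι]

def superpotential (a : 𝕜) (p : (ι → 𝕜) × 𝕜) : 𝕜 :=
  (∑ i, p.1 i) + p.2 * (a - ∏ i, p.1 i)

variable (𝕜) in
abbrev coordFst (i : ι) : ((ι → 𝕜) × 𝕜) →L[𝕜] 𝕜 :=
  (ContinuousLinearMap.proj i).comp (ContinuousLinearMap.fst 𝕜 (ι → 𝕜) 𝕜)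

theorem hasFDerivAt_superpotential (a : 𝕜) (z : ι → 𝕜) (w : 𝕜) :
    HasFDerivAt (superpotential a)
      (∑ i, (1 - w * ∏ j ∈ univ.erase i, z j) • coordFst 𝕜 i +
        (a - ∏ i, z i) • ContinuousLinearMap.snd 𝕜 (ι → 𝕜) 𝕜) (z, w) := by
  have hcoord (i : ι) : HasFDerivAt (fun p : (ι → 𝕜) × 𝕜 => p.1 i) (coordFst 𝕜 i) (z, w) :=
    (coordFst 𝕜 i).hasFDerivAt
  have hsum := HasFDerivAt.fun_sum (u := univ) fun i _ => hcoord i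
  have hprod := HasFDerivAt.finsetProd (u := univ) fun i _ => hcoord i
  have h := hsum.add ((ContinuousLinearMap.snd 𝕜 (ι → 𝕜) 𝕜).hasFDerivAt.mul
    ((hasFDerivAt_const a (z, w)).sub hprod))
  refine h.congr_fderiv ?_
  ext v
  · simp only [ContinuousLinearMap.coe_snd', zero_sub, smul_neg, Pi.sub_apply,
      ContinuousLinearMap.add_comp, ContinuousLinearMap.neg_comp, ContinuousLinearMap.smul_comp,
      ContinuousLinearMap.snd_comp_inl, smul_zero, add_zero, add_apply,
      ContinuousLinearMap.comp_apply, ContinuousLinearMap.inl_apply, _root_.sum_apply,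
      ContinuousLinearMap.coe_fst', ContinuousLinearMap.proj_apply, neg_apply, smul_apply,
      smul_eq_mul]
    rw [mul_sum, ← sum_neg_distrib, ← sum_add_distrib]
    exact sum_congr rfl fun i _ => by ring
  · simp

theorem sum_smul_coordFst_add_smul_snd_eq_zero_iff (c : ι → 𝕜) (d : 𝕜) :
    ∑ i, c i • coordFst 𝕜 i + d • ContinuousLinearMap.snd 𝕜 (ι → 𝕜) 𝕜 = 0 ↔
      (∀ i, c i = 0) ∧ d = 0 := by
  constructor
  · intro h
    refine ⟨fun i => ?_, ?_⟩
    · simpa [Pi.single_apply] using congr($h (Pi.single i 1, 0))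
    · simpa using congr($h (0, 1))
  · rintro ⟨hc, rfl⟩
    ext <;> simp [hc]

theorem fderiv_superpotential_eq_zero_iff (a : 𝕜) (z : ι → 𝕜) (w : 𝕜) :
    fderiv 𝕜 (superpotential a) (z, w) = 0 ↔
      (∀ i, w * ∏ j ∈ univ.erase i, z j = 1) ∧ ∏ i, z i = a := by
  rw [(hasFDerivAt_superpotential a z w).fderiv, sum_smul_coordFst_add_smul_snd_eq_zero_iff]
  exact and_congr (forall_congr' fun i => sub_eq_zero.trans eq_comm) (sub_eq_zero.trans eq_comm)

end Superpotential

section CriticalEquations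

variable {ι : Type*} [Fintype ι] [DecidableEq ι]

theorem eq_mul_of_mul_prod_erase_eq_one {M : Type*} [CommMonoid M] {z : ι → M} {w a : M}
    {i : ι} (hi : w * ∏ j ∈ univ.erase i, z j = 1) (hprod : ∏ j, z j = a) : z i = w * a :=
  calc z i = (w * ∏ j ∈ univ.erase i, z j) * z i := by rw [hi, one_mul]
    _ = w * a := by rw [mul_assoc, prod_erase_mul _ _ (mem_univ i), hprod]

variable {K : Type*} [Field K]

theorem forall_mul_prod_erase_eq_one_and_prod_eq_iff [Nonempty ι] {a : K} (ha : a ≠ 0)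
    (z : ι → K) (w : K) :
    ((∀ i, w * ∏ j ∈ univ.erase i, z j = 1) ∧ ∏ i, z i = a) ↔
      ∃ ζ : K, ζ ≠ 0 ∧ ζ ^ Fintype.card ι = a ∧ (∀ i, z i = ζ) ∧
        w = ζ ^ ((1 : ℤ) - Fintype.card ι) := by
  constructor
  · rintro ⟨hcrit, hprod⟩
    have hz (i : ι) : z i = w * a := eq_mul_of_mul_prod_erase_eq_one (hcrit i) hprod
    have hw : w ≠ 0 := left_ne_zero_of_mul_eq_one (hcrit (Classical.arbitrary ι))
    have hpow : (w * a) ^ Fintype.card ι = a := by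
      simpa only [hz, prod_const, card_univ] using hprod
    refine ⟨w * a, mul_ne_zero hw ha, hpow, hz, ?_⟩
    rw [zpow_one_sub_natCast₀ (mul_ne_zero hw ha), hpow, mul_div_cancel_right₀ w ha]
  · rintro ⟨ζ, hζ, hpow, hz, rfl⟩
    have hn : Fintype.card ι ≠ 0 := Fintype.card_ne_zero
    refine ⟨fun i => ?_, ?_⟩
    · rw [prod_congr rfl fun j _ => hz j, prod_const, card_erase_of_mem (mem_univ i), card_univ,
        zpow_one_sub_natCast₀ hζ, div_mul_eq_mul_div, mul_pow_sub_one hn,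
        div_self (pow_ne_zero _ hζ)]
    · rw [prod_congr rfl fun i _ => hz i, prod_const, card_univ, hpow]

end CriticalEquations

theorem mirror_superpotential_critical_points_general (n : ℕ) (hn : 1 ≤ n) (a : ℂ) (ha : a ≠ 0)
    (z : Fin n → ℂ) (w : ℂ) :
    let F : ((Fin n → ℂ) × ℂ) → ℂ :=
      fun p => (∑ i, p.1 i) + p.2 * (a - ∏ i, p.1 i)
    fderiv ℂ F (z, w) = 0 ↔
      ∃ ζ : ℂ, ζ ≠ 0 ∧ ζ ^ n = a ∧ (∀ i, z i = ζ) ∧ w = ζ ^ ((1 : ℤ) - n) := by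
  have : Nonempty (Fin n) := ⟨⟨0, hn⟩⟩
  change fderiv ℂ (superpotential a) (z, w) = 0 ↔ _
  rw [fderiv_superpotential_eq_zero_iff, forall_mul_prod_erase_eq_one_and_prod_eq_iff ha,
    Fintype.card_fin]

/-- Critical points of the Landau–Ginzburg superpotential
`F(z,w) = z₁ + ⋯ + zₙ + w(a - z₁⋯zₙ)` with all `zᵢ ≠ 0` are exactly the points
`z₁ = ⋯ = zₙ = ζ`, `w = ζ^{1-n}` for `ζ` an `n`-th root of `a`. -/
theorem mirror_superpotential_critical_points (n : ℕ) (hn : 1 ≤ n) (a : ℂ) (ha : a ≠ 0)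
    (z : Fin n → ℂ) (hz : ∀ i, z i ≠ 0) (w : ℂ) :
    let F : ((Fin n → ℂ) × ℂ) → ℂ :=
      fun p => (∑ i, p.1 i) + p.2 * (a - ∏ i, p.1 i)
    fderiv ℂ F (z, w) = 0 ↔
      ∃ ζ : ℂ, ζ ≠ 0 ∧ ζ ^ n = a ∧ (∀ i, z i = ζ) ∧ w = ζ ^ ((1 : ℤ) - n) :=
  mirror_superpotential_critical_points_general n hn a ha z w
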